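/- arXiv:2312.14620 — 6 statements merged into one kernel-verified Lean document; each statement's English description precedes it below -/
import Mathlib

section
/- Define tower : ℕ → ℝ → ℝ by tower 0 t = t and tower (h+1) t = 2^(tower h t). Then for all h and all t ≥ 0, log₂(12) + tower (h+1) (t + log₂ 12) ≤ tower (h+2) (t + log₂ 12 + 1). -/
noncomputable def tower : ℕ → ℝ → ℝ
  | 0, t => t
  | h + 1, t => (2 : ℝ) ^ (tower h t)

/-! Write `L = log₂ 12` and `x = tower (h+1) (t + L)`. Since `tower h` dominates the identity,
`L ≤ t + L ≤ x`, so `L + x ≤ 2x ≤ 2 · 2^x = 2^(x+1)`. Raising the top of a tower by one raises its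
value by at least one, so `x + 1 ≤ tower (h+1) (t + L + 1)` and `2^(x+1) ≤ tower (h+2) (t + L + 1)`. -/

lemma self_lt_two_rpow (x : ℝ) : x < 2 ^ x := by
  rcases lt_or_ge x 0 with hx | hx
  · exact hx.trans (by positivity)
  calc x < ⌊x⌋₊ + 1 := Nat.lt_floor_add_one x
    _ ≤ (2 : ℝ) ^ ⌊x⌋₊ := by exact_mod_cast Nat.lt_two_pow_self
    _ = 2 ^ (⌊x⌋₊ : ℝ) := (Real.rpow_natCast 2 _).symm
    _ ≤ 2 ^ x := Real.rpow_le_rpow_of_exponent_le one_le_two (Nat.floor_le hx)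

namespace tower

lemma self_le (h : ℕ) (t : ℝ) : t ≤ tower h t := by
  induction h with
  | zero => rfl
  | succ n ih => exact ih.trans (self_lt_two_rpow _).le

lemma nonneg (h : ℕ) {t : ℝ} (ht : 0 ≤ t) : 0 ≤ tower h t :=
  ht.trans (self_le h t)

lemma add_one_le (h : ℕ) {t : ℝ} (ht : 0 ≤ t) : tower h t + 1 ≤ tower h (t + 1) := by
  induction h with
  | zero => rfl
  | succ n ih =>
    have hone : (1 : ℝ) ≤ 2 ^ tower n t := Real.one_le_rpow one_le_two (nonneg n ht)
    calc (2 : ℝ) ^ tower n t + 1 ≤ 2 * 2 ^ tower n t := by linarith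
      _ = 2 ^ (tower n t + 1) := by rw [Real.rpow_add_one two_ne_zero, mul_comm]
      _ ≤ 2 ^ tower n (t + 1) := Real.rpow_le_rpow_of_exponent_le one_le_two ih

lemma add_le_succ_add_one (h : ℕ) {c t : ℝ} (hct : c ≤ t) (ht : 0 ≤ t) :
    c + tower h t ≤ tower (h + 1) (t + 1) := by
  have hcx : c ≤ tower h t := hct.trans (self_le h t)
  calc c + tower h t ≤ 2 * 2 ^ tower h t := by linarith [self_lt_two_rpow (tower h t)]
    _ = 2 ^ (tower h t + 1) := by rw [Real.rpow_add_one two_ne_zero, mul_comm]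
    _ ≤ 2 ^ tower h (t + 1) := Real.rpow_le_rpow_of_exponent_le one_le_two (add_one_le h ht)

end tower

theorem stmt2 (h : ℕ) (t : ℝ) (ht : 0 ≤ t) :
    Real.logb 2 12 + tower (h + 1) (t + Real.logb 2 12) ≤
      tower (h + 2) (t + Real.logb 2 12 + 1) := by
  have hL : 0 ≤ Real.logb 2 12 := Real.logb_nonneg one_lt_two (by norm_num)
  exact tower.add_le_succ_add_one (h + 1) (le_add_of_nonneg_left ht) (add_nonneg ht hL)
end

section
/- Let G be a graph and v a simplicial vertex of G (its neighborhood induces a clique). Then tw(G) = max(deg(v), tw(G − v)), where tw denotes treewidth; in particular tw(G) ≤ max(deg(v), tw(G − v)). -/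
/-- `(tr, bag)` is a tree decomposition of the graph `G`. -/
def IsTreeDecomp {V T : Type} (G : SimpleGraph V) (tr : SimpleGraph T)
    (bag : T → Set V) : Prop :=
  tr.IsTree ∧ (∀ v : V, ∃ t, v ∈ bag t) ∧
    (∀ v : V, ((tr.induce {t | v ∈ bag t}).Connected)) ∧
    ∀ u v : V, G.Adj u v → ∃ t, u ∈ bag t ∧ v ∈ bag t

/-- The treewidth of a graph: the least `k` admitting a width-`k` tree decomposition. -/
noncomputable def treewidth {V : Type} (G : SimpleGraph V) : ℕ :=
  sInf {k | ∃ (T : Type) (tr : SimpleGraph T) (bag : T → Set V),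
    IsTreeDecomp G tr bag ∧ ∀ t, (bag t).ncard ≤ k + 1}

/-!
Subtrees of a tree have the Helly property: if finitely many of them meet pairwise, they share a
node. Hence every finite clique of `G` lies in a single bag of any tree decomposition. For the
clique `N[v]` this gives `deg v ≤ tw G`, and restricting all bags to `V - v` gives
`tw (G - v) ≤ tw G`. Conversely, `N(v)` is a clique of `G - v`, so it lies in a bag of an optimal
decomposition of `G - v`; hanging a new leaf with bag `N[v]` at that node yields a tree
decomposition of `G` of width `max (deg v) (tw (G - v))`.
-/

namespace SimpleGraph

variable {T : Type*} {tr : SimpleGraph T}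

lemma Walk.IsCycle.not_isAcyclic_induce {u : T} {c : tr.Walk u u} (hc : c.IsCycle) {s : Set T}
    (hcs : ∀ x ∈ c.support, x ∈ s) : ¬ (tr.induce s).IsAcyclic := fun h =>
  h (c.induce s hcs) <| by
    rw [← Walk.isCycle_map_iff_of_injective (f := (Embedding.induce s).toHom)
      Subtype.val_injective, Walk.map_induce]
    exact hc

lemma IsAcyclic.sum {W : Type*} {H : SimpleGraph W} (htr : tr.IsAcyclic) (hH : H.IsAcyclic) :
    (tr ⊕g H).IsAcyclic := by
  classical
  rintro (a | b) c hc
  · refine hc.not_isAcyclic_induce (s := Set.range Sum.inl) ?_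
      (Embedding.sumInl.isoInduceRange.isAcyclic_iff.mp htr)
    rintro (x | y) hx
    · exact ⟨x, rfl⟩
    · exact (not_reachable_sum_inl_inr a y (c.takeUntil _ hx).reachable).elim
  · refine hc.not_isAcyclic_induce (s := Set.range Sum.inr) ?_
      (Embedding.sumInr.isoInduceRange.isAcyclic_iff.mp hH)
    rintro (x | y) hx
    · exact (not_reachable_sum_inl_inr x b (c.takeUntil _ hx).reachable.symm).elim
    · exact ⟨y, rfl⟩

lemma IsTree.sum_sup_edge {W : Type*} {H : SimpleGraph W} (htr : tr.IsTree) (hH : H.IsTree)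
    (t : T) (w : W) : ((tr ⊕g H) ⊔ edge (Sum.inl t) (Sum.inr w)).IsTree :=
  ⟨htr.connected.sum_sup_edge hH.connected,
    (htr.isAcyclic.sum hH.isAcyclic).sup_edge_of_not_reachable (not_reachable_sum_inl_inr t w)⟩

lemma IsAcyclic.support_subset_of_isPath (htr : tr.IsAcyclic) {x y : T} {p : tr.Walk x y}
    (hp : p.IsPath) (q : tr.Walk x y) : p.support ⊆ q.support := by
  classical
  have : p = q.bypass :=
    congrArg Subtype.val ((htr.subsingleton_path x y).elim ⟨p, hp⟩ ⟨_, q.bypass_isPath⟩)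
  exact this ▸ q.support_bypass_subset_support

lemma exists_walk_of_preconnected_induce {S : Set T} (hS : (tr.induce S).Preconnected)
    {x y : T} (hx : x ∈ S) (hy : y ∈ S) :
    ∃ q : tr.Walk x y, ∀ z ∈ q.support, z ∈ S := by
  obtain ⟨w⟩ := hS ⟨x, hx⟩ ⟨y, hy⟩
  refine ⟨w.map (Embedding.induce S).toHom, fun z hz => ?_⟩
  obtain ⟨z', -, rfl⟩ := List.mem_map.mp (Walk.support_map _ _ ▸ hz)
  exact z'.2

lemma IsAcyclic.support_subset_of_preconnected_induce (htr : tr.IsAcyclic) {S : Set T}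
    (hS : (tr.induce S).Preconnected) {x y : T} (hx : x ∈ S) (hy : y ∈ S) {p : tr.Walk x y}
    (hp : p.IsPath) : ∀ z ∈ p.support, z ∈ S := by
  obtain ⟨q, hq⟩ := exists_walk_of_preconnected_induce hS hx hy
  exact fun z hz => hq z (htr.support_subset_of_isPath hp q hz)

lemma IsAcyclic.connected_induce_inter (htr : tr.IsAcyclic) {A B : Set T}
    (hA : (tr.induce A).Preconnected) (hB : (tr.induce B).Preconnected)
    (hAB : (A ∩ B).Nonempty) : (tr.induce (A ∩ B)).Connected := by
  classical
  have : Nonempty (A ∩ B : Set T) := hAB.to_subtype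
  refine ⟨fun ⟨x, hxA, hxB⟩ ⟨y, hyA, hyB⟩ => ?_⟩
  obtain ⟨q, hq⟩ := exists_walk_of_preconnected_induce hA hxA hyA
  have hpB := htr.support_subset_of_preconnected_induce hB hxB hyB q.bypass_isPath
  exact (q.bypass.induce (A ∩ B) fun z hz =>
    ⟨hq z (q.support_bypass_subset_support hz), hpB z hz⟩).reachable

lemma IsAcyclic.inter_inter_nonempty (htr : tr.IsAcyclic) {A B C : Set T}
    (hA : (tr.induce A).Preconnected) (hB : (tr.induce B).Preconnected)
    (hC : (tr.induce C).Preconnected)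
    (hAB : (A ∩ B).Nonempty) (hBC : (B ∩ C).Nonempty) (hAC : (A ∩ C).Nonempty) :
    (A ∩ B ∩ C).Nonempty := by
  classical
  obtain ⟨a, haA, haB⟩ := hAB
  obtain ⟨b, hbB, hbC⟩ := hBC
  obtain ⟨c, hcA, hcC⟩ := hAC
  obtain ⟨qA, hqA⟩ := exists_walk_of_preconnected_induce hA haA hcA
  obtain ⟨qC, hqC⟩ := exists_walk_of_preconnected_induce hC hcC hbC
  -- the path from `a` to `b` lies in `B` and in `A ∪ C`
  set p := (qA.append qC).bypass
  have hpB := htr.support_subset_of_preconnected_induce hB haB hbB (qA.append qC).bypass_isPath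
  have hpAC : ∀ z ∈ p.support, z ∈ A ∨ z ∈ C := fun z hz =>
    ((Walk.mem_support_append_iff _ _).mp ((qA.append qC).support_bypass_subset_support hz)).imp
      (hqA z) (hqC z)
  by_cases hbA : b ∈ A
  · exact ⟨b, ⟨hbA, hbB⟩, hbC⟩
  obtain ⟨⟨⟨x, y⟩, hxy⟩, hd, hxA, hyA⟩ := p.exists_boundary_dart A haA hbA
  have hyC : y ∈ C := (hpAC y (p.dart_snd_mem_support_of_mem_darts hd)).resolve_left hyA
  by_cases hxC : x ∈ C
  · exact ⟨x, ⟨hxA, hpB x (p.dart_fst_mem_support_of_mem_darts hd)⟩, hxC⟩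
  -- otherwise the bridge `xy` would be avoided by a walk from `x` to `y` through `c`
  exfalso
  obtain ⟨rA, hrA⟩ := exists_walk_of_preconnected_induce hA hxA hcA
  obtain ⟨rC, hrC⟩ := exists_walk_of_preconnected_induce hC hcC hyC
  have hbridge := isBridge_iff_forall_walk_mem_edges.mp
    (isAcyclic_iff_forall_adj_isBridge.mp htr hxy) (rA.append rC)
  rw [Walk.edges_append, List.mem_append] at hbridge
  rcases hbridge with h | h
  · exact hyA (hrA y (rA.snd_mem_support_of_mem_edges h))
  · exact hxC (hrC x (rC.fst_mem_support_of_mem_edges h))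

lemma IsAcyclic.exists_mem_of_pairwise_inter_nonempty [Nonempty T] (htr : tr.IsAcyclic)
    {ι : Type*} (F : Finset ι) (S : ι → Set T)
    (hS : ∀ i ∈ F, (tr.induce (S i)).Preconnected)
    (hF : ∀ i ∈ F, ∀ j ∈ F, (S i ∩ S j).Nonempty) :
    ∃ t, ∀ i ∈ F, t ∈ S i := by
  classical
  induction F using Finset.induction_on generalizing S with
  | empty => exact ⟨Classical.arbitrary T, by simp⟩
  | @insert a F _ ih =>
    have hSa := hS a (F.mem_insert_self a)
    have hS' : ∀ i ∈ F, (tr.induce (S i)).Preconnected :=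
      fun i hi => hS i (Finset.mem_insert_of_mem hi)
    have hF' : ∀ i ∈ F, ∀ j ∈ F, (S i ∩ S j).Nonempty :=
      fun i hi j hj => hF i (Finset.mem_insert_of_mem hi) j (Finset.mem_insert_of_mem hj)
    have hFa : ∀ i ∈ F, (S i ∩ S a).Nonempty :=
      fun i hi => hF i (Finset.mem_insert_of_mem hi) a (F.mem_insert_self a)
    rcases F.eq_empty_or_nonempty with rfl | ⟨i₀, hi₀⟩
    · obtain ⟨t, ht, -⟩ := hF a (by simp) a (by simp)
      exact ⟨t, by simpa using ht⟩
    obtain ⟨t, ht⟩ := ih (fun i => S i ∩ S a)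
      (fun i hi => (htr.connected_induce_inter (hS' i hi) hSa (hFa i hi)).preconnected)
      (fun i hi j hj => by
        obtain ⟨t, ⟨hti, htj⟩, hta⟩ := htr.inter_inter_nonempty (hS' i hi) (hS' j hj) hSa
          (hF' i hi j hj) (hFa j hj) (hFa i hi)
        exact ⟨t, ⟨hti, hta⟩, htj, hta⟩)
    refine ⟨t, fun i hi => ?_⟩
    rcases Finset.mem_insert.mp hi with rfl | hi
    · exact (ht i₀ hi₀).2
    · exact (ht i hi).1

lemma Connected.induce_image {V W : Type*} {G : SimpleGraph V} {G' : SimpleGraph W}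
    (f : G →g G') {B : Set V} (h : (G.induce B).Connected) : (G'.induce (f '' B)).Connected :=
  h.map (induceHom f (Set.mapsTo_image f B)) (by rintro ⟨_, b, hb, rfl⟩; exact ⟨⟨b, hb⟩, rfl⟩)

end SimpleGraph

open SimpleGraph

section TreeDecomp

variable {V T : Type} {G : SimpleGraph V} {tr : SimpleGraph T}

lemma isTreeDecomp_univ (G : SimpleGraph V) :
    IsTreeDecomp G (⊥ : SimpleGraph Unit) fun _ => Set.univ :=
  ⟨.of_subsingleton, fun _ => ⟨(), trivial⟩,
    fun u => have : Nonempty {_t : Unit | u ∈ (Set.univ : Set V)} := ⟨⟨(), trivial⟩⟩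
      .of_subsingleton,
    fun _ _ _ => ⟨(), trivial, trivial⟩⟩

lemma IsTreeDecomp.induce {bag : T → Set V} (hd : IsTreeDecomp G tr bag) (s : Set V) :
    IsTreeDecomp (G.induce s) tr fun t => Subtype.val ⁻¹' bag t := by
  obtain ⟨htr, hcover, hconn, hedge⟩ := hd
  exact ⟨htr, fun u => hcover u, fun u => hconn u, fun a b hab => hedge a b hab⟩

lemma IsTreeDecomp.exists_subset_bag_of_isClique {bag : T → Set V} (hd : IsTreeDecomp G tr bag)
    {K : Set V} (hK : K.Finite) (hKc : G.IsClique K) : ∃ t, K ⊆ bag t := by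
  obtain ⟨htr, hcover, hconn, hedge⟩ := hd
  have := htr.connected.nonempty
  obtain ⟨t, ht⟩ := htr.isAcyclic.exists_mem_of_pairwise_inter_nonempty hK.toFinset
    (fun u => {t | u ∈ bag t}) (fun u _ => (hconn u).preconnected) fun u hu w hw => by
      rcases eq_or_ne u w with rfl | huw
      · obtain ⟨t, ht⟩ := hcover u
        exact ⟨t, ht, ht⟩
      · exact hedge u w (hKc (hK.mem_toFinset.mp hu) (hK.mem_toFinset.mp hw) huw)
  exact ⟨t, fun u hu => ht u (hK.mem_toFinset.mpr hu)⟩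

lemma IsTreeDecomp.sum_sup_edge {s : Set V} {bag : T → Set s}
    (hd : IsTreeDecomp (G.induce s) tr bag) {X : Set V} (hX : sᶜ ⊆ X)
    (hXadj : ∀ u w, G.Adj u w → u ∉ s → w ∈ X) {t₀ : T} (ht₀ : ∀ w : s, w.1 ∈ X → w ∈ bag t₀) :
    IsTreeDecomp G ((tr ⊕g (⊥ : SimpleGraph Unit)) ⊔ edge (Sum.inl t₀) (Sum.inr ()))
      (Sum.elim (fun t => Subtype.val '' bag t) fun _ => X) := by
  obtain ⟨htr, hcover, hconn, hedge⟩ := hd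
  refine ⟨htr.sum_sup_edge .of_subsingleton t₀ (), fun u => ?_, fun u => ?_, fun u w huw => ?_⟩
  · by_cases hu : u ∈ s
    · obtain ⟨t, ht⟩ := hcover ⟨u, hu⟩
      exact ⟨.inl t, _, ht, rfl⟩
    · exact ⟨.inr (), hX hu⟩
  · set bag' : T ⊕ Unit → Set V := Sum.elim (fun t => Subtype.val '' bag t) fun _ => X
    by_cases hu : u ∈ s
    · set B := Sum.inl '' {t | ⟨u, hu⟩ ∈ bag t}
      have hB : (((tr ⊕g ⊥) ⊔ edge (Sum.inl t₀) (Sum.inr ())).induce B).Connected :=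
        (hconn ⟨u, hu⟩).induce_image ((Hom.ofLE le_sup_left).comp Embedding.sumInl.toHom)
      have hmem : ∀ t, u ∈ Subtype.val '' bag t ↔ ⟨u, hu⟩ ∈ bag t :=
        fun t => Subtype.val_injective.mem_set_image (a := (⟨u, hu⟩ : s))
      by_cases huX : u ∈ X
      · have hset : {x | u ∈ bag' x} = B ∪ {Sum.inr ()} := by
          ext (t | _) <;> simp [bag', B, hmem, huX]
        rw [hset]
        exact connected_induce_union hB.preconnected .of_subsingleton
          ⟨t₀, ht₀ ⟨u, hu⟩ huX, rfl⟩ rfl (by simp [edge_adj])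
      · have hset : {x | u ∈ bag' x} = B := by
          ext (t | _) <;> simp [bag', B, hmem, huX]
        rwa [hset]
    · have hset : {x | u ∈ bag' x} = {Sum.inr ()} := by
        ext (t | _) <;> simp [bag', hu, hX hu]
      rw [hset]
      exact .of_subsingleton
  · by_cases hu : u ∈ s
    · by_cases hw : w ∈ s
      · obtain ⟨t, hut, hwt⟩ := hedge ⟨u, hu⟩ ⟨w, hw⟩ huw
        exact ⟨.inl t, ⟨_, hut, rfl⟩, _, hwt, rfl⟩
      · exact ⟨.inr (), hXadj w u huw.symm hw, hX hw⟩
    · exact ⟨.inr (), hX hu, hXadj u w huw hu⟩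

end TreeDecomp

section Treewidth

variable {V : Type} {G : SimpleGraph V}

lemma treewidth_le_of_isTreeDecomp {T : Type} {tr : SimpleGraph T} {bag : T → Set V} {k : ℕ}
    (hd : IsTreeDecomp G tr bag) (hk : ∀ t, (bag t).ncard ≤ k + 1) : treewidth G ≤ k :=
  Nat.sInf_le ⟨T, tr, bag, hd, hk⟩

lemma exists_isTreeDecomp_treewidth (G : SimpleGraph V) :
    ∃ (T : Type) (tr : SimpleGraph T) (bag : T → Set V),
      IsTreeDecomp G tr bag ∧ ∀ t, (bag t).ncard ≤ treewidth G + 1 :=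
  Nat.sInf_mem (s := {k | ∃ (T : Type) (tr : SimpleGraph T) (bag : T → Set V),
    IsTreeDecomp G tr bag ∧ ∀ t, (bag t).ncard ≤ k + 1})
    ⟨Nat.card V, Unit, ⊥, _, isTreeDecomp_univ G,
      fun _ => (Set.ncard_univ V).trans_le (Nat.le_succ _)⟩

variable [Finite V]

lemma treewidth_induce_le (s : Set V) : treewidth (G.induce s) ≤ treewidth G := by
  obtain ⟨T, tr, bag, hd, hk⟩ := exists_isTreeDecomp_treewidth G
  refine treewidth_le_of_isTreeDecomp (hd.induce s) fun t => ?_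
  calc (Subtype.val ⁻¹' bag t).ncard
      = (Subtype.val '' (Subtype.val ⁻¹' bag t)).ncard :=
        (Set.ncard_image_of_injective _ Subtype.val_injective).symm
    _ ≤ (bag t).ncard := Set.ncard_le_ncard (Set.image_preimage_subset _ _)
    _ ≤ treewidth G + 1 := hk t

lemma SimpleGraph.IsClique.ncard_le_treewidth_add_one {K : Set V} (hK : G.IsClique K) :
    K.ncard ≤ treewidth G + 1 := by
  obtain ⟨T, tr, bag, hd, hk⟩ := exists_isTreeDecomp_treewidth G
  obtain ⟨t, ht⟩ := hd.exists_subset_bag_of_isClique K.toFinite hK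
  exact (Set.ncard_le_ncard ht).trans (hk t)

lemma treewidth_le_max_of_isClique_neighborSet {v : V} (hv : G.IsClique (G.neighborSet v)) :
    treewidth G ≤ max (G.neighborSet v).ncard (treewidth (G.induce {u | u ≠ v})) := by
  obtain ⟨T, tr, bag, hd, hk⟩ := exists_isTreeDecomp_treewidth (G.induce {u | u ≠ v})
  obtain ⟨t₀, ht₀⟩ := hd.exists_subset_bag_of_isClique
    (Set.toFinite (Subtype.val ⁻¹' G.neighborSet v))
    fun a ha b hb hab => hv ha hb (Subtype.val_injective.ne hab)
  refine treewidth_le_of_isTreeDecomp (hd.sum_sup_edge (X := insert v (G.neighborSet v))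
    (fun _ hu => .inl (not_not.mp hu)) (fun _ _ huw hu => .inr (not_not.mp hu ▸ huw))
    fun w hw => ht₀ (hw.resolve_left w.2)) ?_
  rintro (t | _)
  · rw [Sum.elim_inl, Set.ncard_image_of_injective _ Subtype.val_injective]
    exact (hk t).trans (by omega)
  · rw [Sum.elim_inr, Set.ncard_insert_of_notMem G.notMem_neighborSet_self]
    omega

end Treewidth

/-- The simplicial rule: if `v` is a simplicial vertex of `G` (its neighborhood
induces a clique), then `tw(G) = max (deg v) (tw (G - v))`. -/
theorem stmt5 {V : Type} [Fintype V] (G : SimpleGraph V) (v : V)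
    (hsimp : ∀ a ∈ G.neighborSet v, ∀ b ∈ G.neighborSet v, a ≠ b → G.Adj a b) :
    treewidth G = max (G.neighborSet v).ncard (treewidth (G.induce {u | u ≠ v})) := by
  have hv : G.IsClique (G.neighborSet v) := hsimp
  refine le_antisymm (treewidth_le_max_of_isClique_neighborSet hv)
    (max_le ?_ (treewidth_induce_le _))
  have := (hv.insert fun _ hb _ => hb).ncard_le_treewidth_add_one
  rwa [Set.ncard_insert_of_notMem G.notMem_neighborSet_self, Nat.add_le_add_iff_right] at this
end

section
/- Let G be a graph with tree decomposition (T, bag) of width k, and suppose t₁, t₂ are adjacent nodes of T with disjoint bags bag(t₁) = {x₁,…,x_m} and bag(t₂) = {y₁,…,y_m}, and let M = {{x_i, y_i} : 1 ≤ i ≤ m} be a perfect matching between the two bags. Then the graph G ∪ M (G with the matching edges added) has treewidth at most k + 1. -/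
/-!
Replace the tree edge `t₁t₂` by a path `t₁ = p₀, p₁, …, p_m, p_{m+1} = t₂` and give `p_{j+1}` the
bag `{x_j, …, x_{m-1}} ∪ {y_0, …, y_j}`, of size `m + 1 ≤ k + 2`, which contains the matching edge
`x_j y_j`. The subdivided tree is again a tree since each of its edges is a bridge: a side of the
corresponding bridge of the old tree (for a path edge: a side of `t₁t₂` plus an initial segment of
the path) is left only through that edge. The new nodes containing `x_i` are its old ones, among
them `t₁` but not `t₂`, together with the segment `p₀, …, p_{i+1}`; symmetrically for `y_i`; so
these node sets stay connected.
-/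

open Function Set Sum SimpleGraph

namespace SimpleGraph

variable {V W : Type*} {G : SimpleGraph V}

theorem isBridge_iff_exists_cut {u v : V} :
    G.IsBridge s(u, v) ↔ ∃ S : Set V, u ∈ S ∧ v ∉ S ∧
      ∀ a b, G.Adj a b → a ∈ S → b ∉ S → s(a, b) = s(u, v) := by
  refine ⟨fun h => ⟨{w | (G.deleteEdges {s(u, v)}).Reachable u w}, .rfl, h,
    fun a b hab ha hb => ?_⟩, fun ⟨S, hu, hv, hS⟩ ⟨p⟩ => ?_⟩
  · by_contra hne
    exact hb (ha.trans (deleteEdges_adj.2 ⟨hab, hne⟩).reachable)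
  · obtain ⟨d, -, hd₁, hd₂⟩ := p.exists_boundary_dart S hu hv
    obtain ⟨hadj, hne⟩ := deleteEdges_adj.1 d.adj
    exact hne (hS _ _ hadj hd₁ hd₂)

theorem connected_induce_image_Icc {f : ℕ → V} {a b : ℕ} (hab : a ≤ b)
    (hf : ∀ d, a ≤ d → d < b → G.Adj (f d) (f (d + 1))) :
    (G.induce (f '' Icc a b)).Connected := by
  rw [connected_iff_exists_forall_reachable]
  refine ⟨⟨f a, a, ⟨le_rfl, hab⟩, rfl⟩, ?_⟩
  rintro ⟨_, d, ⟨had, hdb⟩, rfl⟩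
  induction d, had using Nat.le_induction with
  | base => rfl
  | succ d had ih => exact (ih (by omega)).trans (Adj.reachable (hf d had (by omega)))

theorem Connected.induce_image_s7 {H : SimpleGraph W} {s : Set V} (f : V → W)
    (hf : ∀ a ∈ s, ∀ b ∈ s, G.Adj a b → H.Adj (f a) (f b)) (hs : (G.induce s).Connected) :
    (H.induce (f '' s)).Connected :=
  hs.map (⟨fun p => ⟨f p.1, p.1, p.2, rfl⟩, fun {p q} h => hf _ p.2 _ q.2 h⟩ :
    G.induce s →g H.induce (f '' s)) (by rintro ⟨_, a, ha, rfl⟩; exact ⟨⟨a, ha⟩, rfl⟩)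

section Subdivision

variable {T : Type*} (tr : SimpleGraph T) (t₁ t₂ : T) (m : ℕ)

/-- The path replacing the edge `t₁t₂`: `t₁, inr 0, …, inr (m - 1), t₂`, at positions
`0, 1, …, m, m + 1`. -/
def subdivPath : ℕ → T ⊕ Fin m
  | 0 => inl t₁
  | d + 1 => if h : d < m then inr ⟨d, h⟩ else inl t₂

def subdivide : SimpleGraph (T ⊕ Fin m) := fromRel fun u v =>
  (∃ a b, tr.Adj a b ∧ s(a, b) ≠ s(t₁, t₂) ∧ u = inl a ∧ v = inl b) ∨
    ∃ d ≤ m, u = subdivPath t₁ t₂ m d ∧ v = subdivPath t₁ t₂ m (d + 1)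

variable {tr t₁ t₂ m}

@[simp] lemma subdivPath_zero : subdivPath t₁ t₂ m 0 = inl t₁ := rfl

@[simp] lemma subdivPath_succ_self : subdivPath t₁ t₂ m (m + 1) = inl t₂ := by
  simp [subdivPath]

lemma subdivPath_val_succ (j : Fin m) : subdivPath t₁ t₂ m (j + 1) = inr j := by
  simp [subdivPath]

lemma subdivPath_eq_inl_iff {d : ℕ} (hd : d ≤ m + 1) {a : T} :
    subdivPath t₁ t₂ m d = inl a ↔ d = 0 ∧ t₁ = a ∨ d = m + 1 ∧ t₂ = a := by
  cases d with
  | zero => simp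
  | succ d => by_cases h : d < m <;> simp [subdivPath, h] <;> omega

lemma subdivPath_eq_inr_iff {d : ℕ} {j : Fin m} : subdivPath t₁ t₂ m d = inr j ↔ d = j + 1 := by
  cases d with
  | zero => simp
  | succ d =>
    by_cases h : d < m <;> simp [subdivPath, h, Fin.ext_iff]
    omega

lemma subdivide_adj_inl {a b : T} (hab : tr.Adj a b) (hne : s(a, b) ≠ s(t₁, t₂)) :
    (subdivide tr t₁ t₂ m).Adj (inl a) (inl b) :=
  (fromRel_adj _ _ _).2 ⟨by simpa using hab.ne, .inl (.inl ⟨a, b, hab, hne, rfl, rfl⟩)⟩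

lemma subdivide_adj_subdivPath (hne : t₁ ≠ t₂) {d : ℕ} (hd : d ≤ m) :
    (subdivide tr t₁ t₂ m).Adj (subdivPath t₁ t₂ m d) (subdivPath t₁ t₂ m (d + 1)) := by
  refine (fromRel_adj _ _ _).2 ⟨?_, .inl (.inr ⟨d, hd, rfl, rfl⟩)⟩
  cases d with
  | zero => by_cases h : 0 < m <;> simp [subdivPath, h, hne]
  | succ d =>
    have hd' : d < m := by omega
    by_cases h : d + 1 < m <;> simp [subdivPath, h, hd', Fin.ext_iff]

lemma subdivide_adj_cases {u v : T ⊕ Fin m} (h : (subdivide tr t₁ t₂ m).Adj u v) :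
    (∃ a b, tr.Adj a b ∧ s(a, b) ≠ s(t₁, t₂) ∧ u = inl a ∧ v = inl b) ∨
      ∃ d ≤ m, s(u, v) = s(subdivPath t₁ t₂ m d, subdivPath t₁ t₂ m (d + 1)) := by
  obtain ⟨-, (⟨a, b, hab, hne, rfl, rfl⟩ | ⟨d, hd, rfl, rfl⟩) |
    (⟨a, b, hab, hne, rfl, rfl⟩ | ⟨d, hd, rfl, rfl⟩)⟩ := (fromRel_adj _ _ _).1 h
  · exact .inl ⟨a, b, hab, hne, rfl, rfl⟩
  · exact .inr ⟨d, hd, rfl⟩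
  · exact .inl ⟨b, a, hab.symm, by rwa [Sym2.eq_swap], rfl, rfl⟩
  · exact .inr ⟨d, hd, Sym2.eq_swap⟩

lemma subdivide_reachable_subdivPath (hne : t₁ ≠ t₂) {d : ℕ} (hd : d ≤ m + 1) :
    (subdivide tr t₁ t₂ m).Reachable (inl t₁) (subdivPath t₁ t₂ m d) := by
  induction d with
  | zero => rfl
  | succ d ih => exact (ih (by omega)).trans (subdivide_adj_subdivPath hne (by omega)).reachable

lemma subdivide_reachable_inl (hne : t₁ ≠ t₂) {a b : T} (h : tr.Reachable a b) :
    (subdivide tr t₁ t₂ m).Reachable (inl a) (inl b) := by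
  obtain ⟨p⟩ := h
  induction p with
  | nil => rfl
  | @cons a b _ hab _ ih =>
    refine .trans ?_ ih
    by_cases he : s(a, b) = s(t₁, t₂)
    · have h₁₂ := subdivide_reachable_subdivPath (tr := tr) hne (le_refl (m + 1))
      rcases Sym2.eq_iff.1 he with ⟨rfl, rfl⟩ | ⟨rfl, rfl⟩
      · simpa using h₁₂
      · simpa using h₁₂.symm
    · exact (subdivide_adj_inl hab he).reachable

theorem subdivide_connected (htr : tr.Connected) (hne : t₁ ≠ t₂) :
    (subdivide tr t₁ t₂ m).Connected := by
  refine (connected_iff_exists_forall_reachable _).2 ⟨inl t₁, ?_⟩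
  rintro (a | j)
  · exact subdivide_reachable_inl hne (htr.preconnected t₁ a)
  · simpa [subdivPath_val_succ] using
      subdivide_reachable_subdivPath (tr := tr) hne (d := j + 1) (Nat.succ_le_succ j.isLt.le)

lemma subdivide_isBridge_inl (htr : tr.IsAcyclic) (h₁₂ : tr.Adj t₁ t₂) {a b : T}
    (hab : tr.Adj a b) (hne : s(a, b) ≠ s(t₁, t₂)) :
    (subdivide tr t₁ t₂ m).IsBridge s(inl a, inl b) := by
  obtain ⟨S, ha, hb, hS⟩ := isBridge_iff_exists_cut.1 (isAcyclic_iff_forall_adj_isBridge.1 htr hab)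
  have h₁₂S : t₁ ∈ S ↔ t₂ ∈ S := by
    refine ⟨fun h₁ => ?_, fun h₂ => ?_⟩ <;> by_contra h
    · exact hne (hS _ _ h₁₂ h₁ h).symm
    · exact hne (Sym2.eq_swap.trans (hS _ _ h₁₂.symm h₂ h)).symm
  -- collapse the path onto `t₁`, which lies on the same side of `ab` as `t₂`
  have hpath (d : ℕ) : (subdivPath t₁ t₂ m d).elim (· ∈ S) (fun _ => t₁ ∈ S) ↔ t₁ ∈ S := by
    cases d with
    | zero => rfl
    | succ d => by_cases h : d < m <;> simp [subdivPath, h, h₁₂S]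
  refine isBridge_iff_exists_cut.2 ⟨{w | w.elim (· ∈ S) (fun _ => t₁ ∈ S)}, ha, hb,
    fun u v huv hu hv => ?_⟩
  rcases subdivide_adj_cases huv with ⟨a', b', hab', -, rfl, rfl⟩ | ⟨d, -, he⟩
  · simpa using congrArg (Sym2.map (inl : T → T ⊕ Fin m)) (hS a' b' hab' hu hv)
  · exfalso
    rcases Sym2.eq_iff.1 he with ⟨rfl, rfl⟩ | ⟨rfl, rfl⟩ <;>
      exact hv ((hpath _).2 ((hpath _).1 hu))

lemma subdivide_isBridge_subdivPath (htr : tr.IsAcyclic) (h₁₂ : tr.Adj t₁ t₂) {c : ℕ}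
    (hc : c ≤ m) :
    (subdivide tr t₁ t₂ m).IsBridge s(subdivPath t₁ t₂ m c, subdivPath t₁ t₂ m (c + 1)) := by
  obtain ⟨S, h₁, h₂, hS⟩ :=
    isBridge_iff_exists_cut.1 (isAcyclic_iff_forall_adj_isBridge.1 htr h₁₂)
  set L : Set (T ⊕ Fin m) := {w | w.elim (· ∈ S) (fun j => j.val < c)}
  have hL {d : ℕ} (hd : d ≤ m + 1) : subdivPath t₁ t₂ m d ∈ L ↔ d ≤ c := by
    cases d with
    | zero => simpa [L] using h₁
    | succ d =>
      by_cases h : d < m <;> simp [L, subdivPath, h, h₂]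
      omega
  refine isBridge_iff_exists_cut.2 ⟨L, (hL (by omega)).2 le_rfl,
    fun h => by simpa using (hL (by omega)).1 h, fun u v huv hu hv => ?_⟩
  rcases subdivide_adj_cases huv with ⟨a, b, hab, hne, rfl, rfl⟩ | ⟨d, hd, he⟩
  · exact absurd (hS a b hab hu hv) hne
  · rcases Sym2.eq_iff.1 he with ⟨rfl, rfl⟩ | ⟨rfl, rfl⟩ <;>
      rw [hL (by omega)] at hu hv
    · obtain rfl : d = c := by omega
      rfl
    · omega

theorem subdivide_isAcyclic (htr : tr.IsAcyclic) (h₁₂ : tr.Adj t₁ t₂) :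
    (subdivide tr t₁ t₂ m).IsAcyclic := by
  refine isAcyclic_iff_forall_adj_isBridge.2 fun u v huv => ?_
  rcases subdivide_adj_cases huv with ⟨a, b, hab, hne, rfl, rfl⟩ | ⟨d, hd, he⟩
  · exact subdivide_isBridge_inl htr h₁₂ hab hne
  · exact he ▸ subdivide_isBridge_subdivPath htr h₁₂ hd

theorem IsTree.subdivide (htr : tr.IsTree) (h₁₂ : tr.Adj t₁ t₂) :
    (subdivide tr t₁ t₂ m).IsTree :=
  ⟨subdivide_connected htr.connected h₁₂.ne, subdivide_isAcyclic htr.isAcyclic h₁₂⟩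

lemma subdivide_connected_induce_image_inl {s : Set T} (hs : (tr.induce s).Connected)
    (h : ¬(t₁ ∈ s ∧ t₂ ∈ s)) : ((subdivide tr t₁ t₂ m).induce (inl '' s)).Connected :=
  hs.induce_image_s7 inl fun a ha b hb hab => subdivide_adj_inl hab fun he => h <| by
    rcases Sym2.eq_iff.1 he with ⟨rfl, rfl⟩ | ⟨rfl, rfl⟩ <;> simp [ha, hb]

lemma subdivide_connected_induce_image_Icc (hne : t₁ ≠ t₂) {a b : ℕ} (hab : a ≤ b)
    (hb : b ≤ m + 1) :
    ((subdivide tr t₁ t₂ m).induce (subdivPath t₁ t₂ m '' Icc a b)).Connected :=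
  connected_induce_image_Icc hab fun _ _ hd => subdivide_adj_subdivPath hne (by omega)

end Subdivision

section Decomposition

variable {V T : Type*} {bag : T → Set V} {t₁ t₂ : T} {m : ℕ} {x y : Fin m → V}

variable (bag x y) in
def subdivBag : T ⊕ Fin m → Set V
  | inl t => bag t
  | inr j => x '' Ici j ∪ y '' Iic j

lemma ncard_subdivBag_inr_le (j : Fin m) : (subdivBag bag x y (inr j)).ncard ≤ m + 1 :=
  calc (subdivBag bag x y (inr j)).ncard
      ≤ (x '' Ici j).ncard + (y '' Iic j).ncard := ncard_union_le _ _
    _ ≤ (Ici j).ncard + (Iic j).ncard :=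
      add_le_add (ncard_image_le (toFinite _)) (ncard_image_le (toFinite _))
    _ = m + 1 := by
      rw [← Finset.coe_Ici, ← Finset.coe_Iic, ncard_coe_finset, ncard_coe_finset, Fin.card_Ici,
        Fin.card_Iic]
      omega

lemma setOf_mem_subdivBag_of_notMem {v : V} (hvx : v ∉ range x) (hvy : v ∉ range y) :
    {w | v ∈ subdivBag bag x y w} = inl '' {t | v ∈ bag t} := by
  ext (t | j) <;> simp_all [subdivBag]

lemma setOf_mem_subdivBag_left (hx : Injective x) (hb₁ : bag t₁ = range x) {i : Fin m}
    (hi : x i ∉ range y) :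
    {w | x i ∈ subdivBag bag x y w} =
      inl '' {t | x i ∈ bag t} ∪ subdivPath t₁ t₂ m '' Icc 0 (i + 1) := by
  ext (t | j)
  · simp only [subdivBag, mem_ofPred_eq, mem_union, mem_image, inl.injEq, exists_eq_right,
      mem_Icc, zero_le, true_and, iff_self_or, forall_exists_index, and_imp]
    rintro d hd hdt
    obtain ⟨-, rfl⟩ | ⟨rfl, -⟩ := (subdivPath_eq_inl_iff (by omega)).1 hdt
    · simp [hb₁]
    · omega
  · simp only [subdivBag, mem_ofPred_eq, mem_union, hx.mem_set_image, mem_Ici, mem_image,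
      mem_Iic, reduceCtorEq, and_false, exists_false, mem_Icc, zero_le, true_and,
      subdivPath_eq_inr_iff, exists_eq_right, add_le_add_iff_right, Fin.val_fin_le, false_or,
      or_iff_left_iff_imp, forall_exists_index, and_imp]
    exact fun k _ hk => absurd ⟨k, hk⟩ hi

lemma setOf_mem_subdivBag_right (hy : Injective y) (hb₂ : bag t₂ = range y) {i : Fin m}
    (hi : y i ∉ range x) :
    {w | y i ∈ subdivBag bag x y w} =
      inl '' {t | y i ∈ bag t} ∪ subdivPath t₁ t₂ m '' Icc (i + 1) (m + 1) := by
  ext (t | j)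
  · simp only [subdivBag, mem_ofPred_eq, mem_union, mem_image, inl.injEq, exists_eq_right,
      mem_Icc, Order.add_one_le_iff, iff_self_or, forall_exists_index, and_imp]
    rintro d hid hd hdt
    obtain ⟨rfl, -⟩ | ⟨-, rfl⟩ := (subdivPath_eq_inl_iff (by omega)).1 hdt
    · omega
    · simp [hb₂]
  · simp only [subdivBag, mem_ofPred_eq, mem_union, mem_image, mem_Ici, hy.mem_set_image,
      mem_Iic, reduceCtorEq, and_false, exists_false, mem_Icc, Order.add_one_le_iff,
      subdivPath_eq_inr_iff, exists_eq_right, Order.lt_add_one_iff, Fin.val_fin_le,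
      add_le_add_iff_right, Fin.is_le', and_true, false_or, or_iff_right_iff_imp,
      forall_exists_index, and_imp]
    exact fun k _ hk => absurd ⟨k, hk⟩ hi

lemma connected_induce_setOf_mem_subdivBag {tr : SimpleGraph T} (hne : t₁ ≠ t₂)
    (hx : Injective x) (hy : Injective y) (hb₁ : bag t₁ = range x) (hb₂ : bag t₂ = range y)
    (hxy : Disjoint (range x) (range y)) {v : V} (hv : (tr.induce {t | v ∈ bag t}).Connected) :
    ((subdivide tr t₁ t₂ m).induce {w | v ∈ subdivBag bag x y w}).Connected := by
  by_cases hvx : v ∈ range x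
  · obtain ⟨i, rfl⟩ := hvx
    have hi : x i ∉ range y := hxy.notMem_of_mem_left (mem_range_self i)
    rw [setOf_mem_subdivBag_left hx hb₁ hi]
    refine induce_union_connected
      (subdivide_connected_induce_image_inl hv (by simp [hb₂, hi])).preconnected
      (subdivide_connected_induce_image_Icc hne (Nat.zero_le _) (by omega)).preconnected
      ⟨inl t₁, ⟨t₁, by simp [hb₁], rfl⟩, ⟨0, by simp, rfl⟩⟩
  by_cases hvy : v ∈ range y
  · obtain ⟨i, rfl⟩ := hvy
    rw [setOf_mem_subdivBag_right hy hb₂ hvx]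
    refine induce_union_connected
      (subdivide_connected_induce_image_inl hv (by simp [hb₁, hvx])).preconnected
      (subdivide_connected_induce_image_Icc hne (by omega) le_rfl).preconnected
      ⟨inl t₂, ⟨t₂, by simp [hb₂], rfl⟩, ⟨m + 1, by simp, by simp⟩⟩
  rw [setOf_mem_subdivBag_of_notMem hvx hvy]
  exact subdivide_connected_induce_image_inl hv (by simp [hb₁, hvx])

end Decomposition

end SimpleGraph

theorem IsTreeDecomp.subdivide {V T : Type} {G : SimpleGraph V} {tr : SimpleGraph T}
    {bag : T → Set V} (hd : IsTreeDecomp G tr bag) {t₁ t₂ : T} (h₁₂ : tr.Adj t₁ t₂) {m : ℕ}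
    {x y : Fin m → V} (hx : Injective x) (hy : Injective y) (hb₁ : bag t₁ = range x)
    (hb₂ : bag t₂ = range y) (hdisj : Disjoint (bag t₁) (bag t₂)) :
    IsTreeDecomp (fromRel fun u v => G.Adj u v ∨ ∃ i, u = x i ∧ v = y i)
      (subdivide tr t₁ t₂ m) (subdivBag bag x y) := by
  obtain ⟨htr, hcover, hconn, hedge⟩ := hd
  refine ⟨htr.subdivide h₁₂, fun v => ?_, fun v => ?_, fun u v huv => ?_⟩
  · obtain ⟨t, ht⟩ := hcover v
    exact ⟨inl t, ht⟩
  · exact connected_induce_setOf_mem_subdivBag h₁₂.ne hx hy hb₁ hb₂ (hb₁ ▸ hb₂ ▸ hdisj) (hconn v)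
  · obtain ⟨-, (h | ⟨i, rfl, rfl⟩) | (h | ⟨i, rfl, rfl⟩)⟩ := (fromRel_adj _ _ _).1 huv
    · obtain ⟨t, hu, hv⟩ := hedge _ _ h
      exact ⟨inl t, hu, hv⟩
    · exact ⟨inr i, .inl ⟨i, self_mem_Ici, rfl⟩, .inr ⟨i, self_mem_Iic, rfl⟩⟩
    · obtain ⟨t, hv, hu⟩ := hedge _ _ h
      exact ⟨inl t, hu, hv⟩
    · exact ⟨inr i, .inr ⟨i, self_mem_Iic, rfl⟩, .inl ⟨i, self_mem_Ici, rfl⟩⟩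

/-- Adding a perfect matching between two disjoint bags of adjacent nodes of a width-`k`
tree decomposition increases the treewidth to at most `k + 1`. -/
theorem stmt7 {V T : Type} (G : SimpleGraph V) (tr : SimpleGraph T) (bag : T → Set V)
    (k : ℕ) (hd : IsTreeDecomp G tr bag) (hw : ∀ t, (bag t).ncard ≤ k + 1)
    (t₁ t₂ : T) (hadj : tr.Adj t₁ t₂) (m : ℕ) (x y : Fin m → V)
    (hx : Function.Injective x) (hy : Function.Injective y)
    (hb₁ : bag t₁ = Set.range x) (hb₂ : bag t₂ = Set.range y)
    (hdisj : Disjoint (bag t₁) (bag t₂)) :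
    treewidth (SimpleGraph.fromRel fun u v =>
        G.Adj u v ∨ ∃ i : Fin m, u = x i ∧ v = y i) ≤ k + 1 := by
  have hm : m ≤ k + 1 := by
    simpa [hb₁, ncard_range_of_injective hx] using hw t₁
  refine Nat.sInf_le ⟨T ⊕ Fin m, subdivide tr t₁ t₂ m, subdivBag bag x y,
    hd.subdivide hadj hx hy hb₁ hb₂ hdisj, ?_⟩
  rintro (t | j)
  · exact (hw t).trans (by omega)
  · exact (ncard_subdivBag_inr_le j).trans (by omega)
end

section
/- Let G be a graph with a tree decomposition of width k and let c ≥ 1. Then there is a partition of each bag into at most ⌈(k+1)/c⌉ groups of size at most c such that the multigraph obtained from G by contracting, within each bag, every group into a single super-vertex admits a tree decomposition of width at most ⌈(k+1)/c⌉ − 1; in particular its treewidth is at most ⌈(k+1)/c⌉ (minus-one convention aside, the bag size bound is ⌈(k+1)/c⌉). -/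
/-- Treewidth compression: contracting within each bag groups of at most `c` vertices
into super-vertices yields a decomposition with bags of size at most `⌈(k+1)/c⌉`. -/
theorem stmt8 {V T : Type} (G : SimpleGraph V) (tr : SimpleGraph T) (bag : T → Set V)
    (k c : ℕ) (hc : 1 ≤ c) (hd : IsTreeDecomp G tr bag)
    (hw : ∀ t, (bag t).ncard ≤ k + 1) (huniq : ∀ v : V, ∃! t, v ∈ bag t) :
    ∃ (W : Type) (p : V → W), Function.Surjective p ∧
      (∀ w, (p ⁻¹' {w}).ncard ≤ c) ∧
      (∀ w, ∃ t, p ⁻¹' {w} ⊆ bag t) ∧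
      IsTreeDecomp (SimpleGraph.fromRel fun a b => ∃ u v, p u = a ∧ p v = b ∧ G.Adj u v)
        tr (fun t => p '' bag t) ∧
      (∀ t, (p '' bag t).ncard ≤ (k + 1 + (c - 1)) / c) ∧
      treewidth (SimpleGraph.fromRel fun a b => ∃ u v, p u = a ∧ p v = b ∧ G.Adj u v)
        ≤ (k + 1 + (c - 1)) / c := by
  classical
  have hc' : 0 < c := hc
  choose tV htV huV using huniq
  -- the unique bag of v is tV v
  have hbag : ∀ {v : V} {s : T}, v ∈ bag s → s = tV v := fun hv => huV _ _ hv
  -- index of a vertex within its bag (0 if the bag is infinite)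
  let idx : T → V → ℕ := fun s v =>
    if h : (bag s).Finite then
      if hv : v ∈ bag s then
        ((h.toFinset.equivFin ⟨v, h.mem_toFinset.mpr hv⟩ : Fin _) : ℕ)
      else 0
    else 0
  have idx_lt : ∀ {s : T} (h : (bag s).Finite) {v : V}, v ∈ bag s →
      idx s v < (bag s).ncard := by
    intro s h v hv
    have : idx s v = ((h.toFinset.equivFin ⟨v, h.mem_toFinset.mpr hv⟩ : Fin _) : ℕ) := by
      simp only [idx, dif_pos h, dif_pos hv]
    rw [this, Set.ncard_eq_toFinset_card (bag s) h]
    exact (h.toFinset.equivFin ⟨v, h.mem_toFinset.mpr hv⟩).isLt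
  have idx_inj : ∀ {s : T}, (bag s).Finite → Set.InjOn (idx s) (bag s) := by
    intro s h u hu v hv huv
    have e1 : idx s u = ((h.toFinset.equivFin ⟨u, h.mem_toFinset.mpr hu⟩ : Fin _) : ℕ) := by
      simp only [idx, dif_pos h, dif_pos hu]
    have e2 : idx s v = ((h.toFinset.equivFin ⟨v, h.mem_toFinset.mpr hv⟩ : Fin _) : ℕ) := by
      simp only [idx, dif_pos h, dif_pos hv]
    rw [e1, e2] at huv
    have := h.toFinset.equivFin.injective (Fin.val_injective huv)
    exact congrArg Subtype.val this
  have idx_inf : ∀ {s : T}, ¬ (bag s).Finite → ∀ v, idx s v = 0 := by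
    intro s h v; simp only [idx, dif_neg h]
  -- the quotient map
  let q : V → T × ℕ := fun v => (tV v, idx (tV v) v / c)
  let p : V → ↥(Set.range q) := fun v => ⟨q v, v, rfl⟩
  have hpq : ∀ {u v : V}, p u = p v ↔ q u = q v := by
    intro u v; exact Subtype.ext_iff
  -- fibers
  have fib : ∀ v0 : V, p ⁻¹' {p v0} = {u ∈ bag (tV v0) | idx (tV v0) u / c = idx (tV v0) v0 / c} := by
    intro v0
    ext u
    simp only [Set.mem_preimage, Set.mem_singleton_iff, Set.mem_setOf_eq, hpq]
    constructor
    · intro h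
      have h1 : tV u = tV v0 := congrArg Prod.fst h
      have h2 : idx (tV u) u / c = idx (tV v0) v0 / c := congrArg Prod.snd h
      exact ⟨h1 ▸ htV u, h1 ▸ h2⟩
    · rintro ⟨hu, hdiv⟩
      have h1 : tV u = tV v0 := (hbag hu).symm
      refine Prod.ext h1 ?_
      show idx (tV u) u / c = idx (tV v0) v0 / c
      rw [h1]; exact hdiv
  -- the grouping value is at most k / c
  have idx_le : ∀ v : V, idx (tV v) v / c ≤ k / c := by
    intro v
    by_cases h : (bag (tV v)).Finite
    · have h1 : idx (tV v) v < (bag (tV v)).ncard := idx_lt h (htV v)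
      have h2 : idx (tV v) v ≤ k := by
        have := hw (tV v); omega
      exact Nat.div_le_div_right h2
    · rw [idx_inf h]; exact Nat.div_le_div_right (Nat.zero_le k)
  have hm : (k + 1 + (c - 1)) / c = k / c + 1 := by
    have : k + 1 + (c - 1) = k + c := by omega
    rw [this, Nat.add_div_right k hc']
  -- bag bound
  have hbagsize : ∀ t, ((fun t => p '' bag t) t).ncard ≤ (k + 1 + (c - 1)) / c := by
    intro s
    have hinj : Set.InjOn (fun w : ↥(Set.range q) => (w : T × ℕ).2) (p '' bag s) := by
      rintro w1 ⟨u1, hu1, rfl⟩ w2 ⟨u2, hu2, rfl⟩ h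
      have e1 : tV u1 = s := (hbag hu1).symm
      have e2 : tV u2 = s := (hbag hu2).symm
      apply Subtype.ext
      exact Prod.ext (e1.trans e2.symm) h
    rw [← Set.ncard_image_of_injOn hinj]
    have hsub : (fun w : ↥(Set.range q) => (w : T × ℕ).2) '' (p '' bag s) ⊆ Set.Iic (k / c) := by
      rintro j ⟨w, ⟨u, hu, rfl⟩, rfl⟩
      exact idx_le u
    calc ((fun w : ↥(Set.range q) => (w : T × ℕ).2) '' (p '' bag s)).ncard
        ≤ (Set.Iic (k / c)).ncard := Set.ncard_le_ncard hsub (Set.finite_Iic _)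
      _ = k / c + 1 := by rw [← Finset.coe_Iic, Set.ncard_coe_finset, Nat.card_Iic]
      _ = (k + 1 + (c - 1)) / c := hm.symm
  -- tree decomposition of the contraction
  have hdec : IsTreeDecomp
      (SimpleGraph.fromRel fun a b => ∃ u v, p u = a ∧ p v = b ∧ G.Adj u v)
      tr (fun t => p '' bag t) := by
    refine ⟨hd.1, ?_, ?_, ?_⟩
    · rintro ⟨w, v0, rfl⟩
      exact ⟨tV v0, v0, htV v0, rfl⟩
    · rintro ⟨w, v0, rfl⟩
      have hset : {t | (⟨q v0, v0, rfl⟩ : ↥(Set.range q)) ∈ (fun t => p '' bag t) t} = {tV v0} := by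
        ext s
        simp only [Set.mem_setOf_eq, Set.mem_singleton_iff, Set.mem_image]
        constructor
        · rintro ⟨u, hu, hpu⟩
          have : q u = q v0 := Subtype.ext_iff.mp hpu
          have h1 : tV u = tV v0 := congrArg Prod.fst this
          exact (hbag hu).trans h1
        · rintro rfl
          exact ⟨v0, htV v0, rfl⟩
      rw [hset, SimpleGraph.connected_iff]
      refine ⟨?_, ⟨⟨tV v0, rfl⟩⟩⟩
      intro a b
      have : a = b := Subtype.ext (a.2.trans b.2.symm)
      rw [this]
    · intro a b hab
      rcases hab with ⟨hne, hR⟩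
      rcases hR with ⟨u, v, hu, hv, huv⟩ | ⟨u, v, hu, hv, huv⟩
      · obtain ⟨t, hut, hvt⟩ := hd.2.2.2 u v huv
        exact ⟨t, ⟨u, hut, hu⟩, ⟨v, hvt, hv⟩⟩
      · obtain ⟨t, hut, hvt⟩ := hd.2.2.2 u v huv
        exact ⟨t, ⟨v, hvt, hv⟩, ⟨u, hut, hu⟩⟩
  refine ⟨↥(Set.range q), p, ?_, ?_, ?_, hdec, hbagsize, ?_⟩
  · rintro ⟨w, v, rfl⟩
    exact ⟨v, rfl⟩
  · rintro ⟨w, v0, rfl⟩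
    have hfib := fib v0
    have : (⟨q v0, v0, rfl⟩ : ↥(Set.range q)) = p v0 := rfl
    rw [this, hfib]
    set s := tV v0 with hs
    by_cases h : (bag s).Finite
    · have hsub1 : {u ∈ bag s | idx s u / c = idx s v0 / c} ⊆ bag s := fun u hu => hu.1
      have hfin : ({u ∈ bag s | idx s u / c = idx s v0 / c}).Finite := h.subset hsub1
      set j := idx s v0 / c with hj
      have hinj : Set.InjOn (idx s) {u ∈ bag s | idx s u / c = j} :=
        (idx_inj h).mono hsub1
      rw [← Set.ncard_image_of_injOn hinj]
      have hsub : idx s '' {u ∈ bag s | idx s u / c = j} ⊆ ↑(Finset.Ico (j * c) ((j + 1) * c)) := by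
        rintro i ⟨u, ⟨hu, hdiv⟩, rfl⟩
        simp only [Finset.coe_Ico, Set.mem_Ico]
        constructor
        · calc j * c = (idx s u / c) * c := by rw [hdiv]
            _ ≤ idx s u := Nat.div_mul_le_self _ _
        · have : idx s u / c < j + 1 := by omega
          exact (Nat.div_lt_iff_lt_mul hc').mp this
      calc (idx s '' {u ∈ bag s | idx s u / c = j}).ncard
          ≤ (↑(Finset.Ico (j * c) ((j + 1) * c)) : Set ℕ).ncard :=
            Set.ncard_le_ncard hsub (Finset.Ico _ _).finite_toSet
        _ = (j + 1) * c - j * c := by rw [Set.ncard_coe_finset, Nat.card_Ico]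
        _ ≤ c := by rw [Nat.succ_mul]; omega
    · have heq : {u ∈ bag s | idx s u / c = idx s v0 / c} = bag s := by
        ext u
        simp only [Set.mem_setOf_eq, and_iff_left_iff_imp]
        intro hu
        rw [idx_inf h u, idx_inf h v0]
      rw [heq, Set.Infinite.ncard h]
      exact Nat.zero_le _
  · rintro ⟨w, v0, rfl⟩
    refine ⟨tV v0, ?_⟩
    intro u hu
    have : q u = q v0 := Subtype.ext_iff.mp hu
    have h1 : tV u = tV v0 := congrArg Prod.fst this
    exact h1 ▸ htV u
  · -- treewidth bound
    have hm1 : 1 ≤ (k + 1 + (c - 1)) / c := by rw [hm]; exact Nat.le_add_left 1 _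
    have hmem : (k + 1 + (c - 1)) / c - 1 ∈ {n | ∃ (T' : Type) (tr' : SimpleGraph T')
        (bag' : T' → Set ↥(Set.range q)),
        IsTreeDecomp (SimpleGraph.fromRel fun a b => ∃ u v, p u = a ∧ p v = b ∧ G.Adj u v) tr' bag' ∧
        ∀ t, (bag' t).ncard ≤ n + 1} := by
      refine ⟨T, tr, fun t => p '' bag t, hdec, ?_⟩
      intro t
      rw [Nat.sub_add_cancel hm1]
      exact hbagsize t
    calc treewidth _ ≤ (k + 1 + (c - 1)) / c - 1 := Nat.sInf_le hmem
      _ ≤ (k + 1 + (c - 1)) / c := Nat.sub_le _ _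
end

section
/- Let ψ = Q₁x₁ … Qₙxₙ . γ be a fully quantified Boolean formula with CNF matrix γ having clauses C₁,…,C_m, with the variables partitioned into maximal blocks B₁,…,B_r of identical consecutive quantifiers. Construct the relational structure 𝒮 with universe {x₁,…,xₙ, C₁,…,C_m}, unary relations block_i = B_i and clause = {C₁,…,C_m}, and binary relations pos = {(x,C) : x ∈ C} and neg = {(x,C) : ¬x ∈ C}. Let φ be the MSO sentence Q₁S₁ … Q_rS_r ∀c ∃x . clause(c) → ⋁_{j=1}^r ((block_j(x) ∧ pos(x,c) ∧ S_j(x)) ∨ (block_j(x) ∧ neg(x,c) ∧ ¬S_j(x))), where Q_j is the quantifier of block B_j. Then ψ evaluates to true iff 𝒮 ⊨ φ. -/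
/-- Semantics of a fully quantified Boolean formula `Q₁x₁ … Qₙxₙ . φ`,
where `Q i = true` means `∃` and `Q i = false` means `∀`. -/
def qeval : (n : ℕ) → (Fin n → Bool) → ((Fin n → Bool) → Prop) → Prop
  | 0, _, φ => φ (fun i => i.elim0)
  | n + 1, Q, φ =>
    if Q 0 then ∃ b, qeval n (fun i => Q i.succ) (fun β => φ (Fin.cons b β))
    else ∀ b, qeval n (fun i => Q i.succ) (fun β => φ (Fin.cons b β))

/-- Semantics of a block of monadic second-order quantifiers `Q₁S₁ … Q_rS_r . P`
over the universe `U`, where `Qb j = true` means `∃` and `Qb j = false` means `∀`. -/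
def msoEval {U : Type} : (r : ℕ) → (Fin r → Bool) → ((Fin r → Set U) → Prop) → Prop
  | 0, _, P => P (fun j => j.elim0)
  | r + 1, Qb, P =>
    if Qb 0 then ∃ S, msoEval r (fun j => Qb j.succ) (fun Ss => P (Fin.cons S Ss))
    else ∀ S, msoEval r (fun j => Qb j.succ) (fun Ss => P (Fin.cons S Ss))

attribute [local instance] Classical.propDecidable

lemma if_true' {α : Sort*} {a b : α} : (if true = true then a else b) = a := rfl
lemma if_false' {α : Sort*} {a b : α} : (if false = true then a else b) = b := rfl

lemma qeval_block : ∀ (k n' : ℕ) (b : Bool) (Q : Fin (n' + k) → Bool)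
    (φ : (Fin (n' + k) → Bool) → Prop)
    (hb : ∀ i : Fin (n' + k), (i : ℕ) < k → Q i = b),
    qeval (n' + k) Q φ ↔
      (if b then
        ∃ g : Fin k → Bool, qeval n' (fun i => Q ⟨(i : ℕ) + k, by omega⟩)
          (fun β => φ (fun i => if h : (i : ℕ) < k then g ⟨i, h⟩
            else β ⟨(i : ℕ) - k, by have := i.isLt; omega⟩))
      else
        ∀ g : Fin k → Bool, qeval n' (fun i => Q ⟨(i : ℕ) + k, by omega⟩)
          (fun β => φ (fun i => if h : (i : ℕ) < k then g ⟨i, h⟩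
            else β ⟨(i : ℕ) - k, by have := i.isLt; omega⟩))) := by
  intro k
  induction k with
  | zero =>
    intro n' b Q φ hb
    have hfun : ∀ (g : Fin 0 → Bool),
        (fun β : Fin n' → Bool => φ (fun i => if h : (i : ℕ) < 0 then g ⟨i, h⟩
            else β ⟨(i : ℕ) - 0, by have := i.isLt; omega⟩)) = φ := by
      intro g
      funext β
      refine congrArg φ (funext fun i => ?_)
      rw [dif_neg (Nat.not_lt_zero _)]
      rfl
    cases b with
    | true =>
      simp only [if_true']
      constructor
      · intro h; exact ⟨fun i => i.elim0, by rw [hfun]; exact h⟩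
      · rintro ⟨g, h⟩; rw [hfun] at h; exact h
    | false =>
      simp only [if_false']
      constructor
      · intro h g; rw [hfun]; exact h
      · intro h; have := h (fun i => i.elim0); rwa [hfun] at this
  | succ k ih =>
    intro n' b Q φ hb
    have hQ0 : Q ⟨0, by omega⟩ = b := hb ⟨0, by omega⟩ (Nat.succ_pos k)
    have estep : qeval (n' + (k+1)) Q φ =
        if Q ⟨0, by omega⟩ then
          ∃ b₀, qeval (n' + k) (fun i : Fin (n'+k) => Q i.succ) (fun β => φ (Fin.cons b₀ β))
        else ∀ b₀, qeval (n' + k) (fun i : Fin (n'+k) => Q i.succ) (fun β => φ (Fin.cons b₀ β)) := rfl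
    rw [estep, hQ0]
    have harg : ∀ (b₀ : Bool) (g : Fin k → Bool) (β : Fin n' → Bool),
        (fun i : Fin (n' + (k+1)) => if h : (i : ℕ) < k + 1 then (Fin.cons b₀ g : Fin (k+1) → Bool) ⟨(i : ℕ), h⟩
            else β ⟨(i : ℕ) - (k+1), by have := i.isLt; omega⟩)
        = Fin.cons b₀ (fun i : Fin (n' + k) => if h : (i : ℕ) < k then g ⟨i, h⟩
            else β ⟨(i : ℕ) - k, by have := i.isLt; omega⟩) := by
      intro b₀ g β
      funext i
      refine Fin.cases ?_ ?_ i
      · simp [Fin.mk_zero]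
      · intro j
        simp only [Fin.cons_succ, Fin.val_succ]
        by_cases h : (j : ℕ) < k
        · rw [dif_pos (by omega), dif_pos h]
          have : (⟨(j : ℕ) + 1, by omega⟩ : Fin (k+1)) = Fin.succ ⟨(j : ℕ), h⟩ := rfl
          rw [this, Fin.cons_succ]
        · rw [dif_neg (by omega), dif_neg h]
          congr 1
          exact Fin.ext (by simp only [Nat.succ_sub_succ])
    have hrest : ∀ (b₀ : Bool) (g : Fin k → Bool),
        qeval n' (fun i => Q (⟨(i : ℕ) + k, by omega⟩ : Fin (n' + k)).succ)
          (fun β => φ (Fin.cons b₀ (fun i : Fin (n' + k) => if h : (i : ℕ) < k then g ⟨i, h⟩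
            else β ⟨(i : ℕ) - k, by have : (i : ℕ) < n' + k := i.isLt; omega⟩)))
        = qeval n' (fun i => Q ⟨(i : ℕ) + (k+1), by omega⟩)
          (fun β => φ (fun i => if h : (i : ℕ) < k + 1 then (Fin.cons b₀ g : Fin (k+1) → Bool) ⟨(i : ℕ), h⟩
            else β ⟨(i : ℕ) - (k+1), by have := i.isLt; omega⟩)) := by
      intro b₀ g
      congr 1
      all_goals first
        | rfl
        | (funext β; rw [harg])
    cases b with
    | true =>
      simp only [if_true']
      constructor
      · rintro ⟨b₀, h⟩
        rw [ih n' true (fun i => Q i.succ) (fun β => φ (Fin.cons b₀ β))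
          (fun i hi => hb i.succ (by simpa using Nat.succ_lt_succ hi))] at h
        simp only [if_true'] at h
        obtain ⟨g, hg⟩ := h
        exact ⟨Fin.cons b₀ g, Eq.mp (hrest b₀ g) hg⟩
      · rintro ⟨g', hg'⟩
        rw [← Fin.cons_self_tail g'] at hg'
        refine ⟨g' 0, ?_⟩
        rw [ih n' true (fun i => Q i.succ) (fun β => φ (Fin.cons (g' 0) β))
          (fun i hi => hb i.succ (by simpa using Nat.succ_lt_succ hi))]
        simp only [if_true']
        exact ⟨Fin.tail g', Eq.mp (hrest (g' 0) (Fin.tail g')).symm hg'⟩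
    | false =>
      simp only [if_false']
      constructor
      · intro h g'
        have h0 := h (g' 0)
        rw [ih n' false (fun i => Q i.succ) (fun β => φ (Fin.cons (g' 0) β))
          (fun i hi => hb i.succ (by simpa using Nat.succ_lt_succ hi))] at h0
        simp only [if_false'] at h0
        rw [← Fin.cons_self_tail g']
        exact Eq.mp (hrest (g' 0) (Fin.tail g')) (h0 (Fin.tail g'))
      · intro h b₀
        rw [ih n' false (fun i => Q i.succ) (fun β => φ (Fin.cons b₀ β))
          (fun i hi => hb i.succ (by simpa using Nat.succ_lt_succ hi))]
        simp only [if_false']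
        intro g
        exact Eq.mp (hrest b₀ g).symm (h (Fin.cons b₀ g))

lemma decide_eq_of_iff {p : Prop} {inst : Decidable p} {b : Bool} (h : p ↔ b = true) :
    @decide p inst = b := by
  cases inst with
  | isTrue hp => exact (h.mp hp).symm
  | isFalse hp =>
    cases hb : b with
    | true => exact absurd (h.mpr hb) hp
    | false => rfl

lemma msoEval_succ' {U : Type} (r : ℕ) (Qb : Fin (r+1) → Bool) (P : (Fin (r+1) → Set U) → Prop) :
    msoEval (r+1) Qb P =
      if Qb 0 then ∃ S, msoEval r (fun j => Qb j.succ) (fun Ss => P (Fin.cons S Ss))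
      else ∀ S, msoEval r (fun j => Qb j.succ) (fun Ss => P (Fin.cons S Ss)) := rfl

lemma key : ∀ (r : ℕ) (Qb : Fin r → Bool) (n : ℕ) (blockOf : Fin n → Fin r)
    (hmono : Monotone blockOf) (hsurj : Function.Surjective blockOf)
    (U : Type) (ι : Fin n → U) (hι : Function.Injective ι)
    (φ : (Fin n → Bool) → Prop),
    qeval n (fun i => Qb (blockOf i)) φ ↔
      msoEval (U := U) r Qb (fun S => φ (fun i => decide (ι i ∈ S (blockOf i)))) := by
  intro r
  induction r with
  | zero =>
    intro Qb n blockOf hmono hsurj U ι hι φ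
    cases n with
    | zero => exact iff_of_eq (congrArg φ (funext fun i => i.elim0))
    | succ n => exact (blockOf 0).elim0
  | succ r ih =>
    intro Qb n blockOf hmono hsurj U ι hι φ
    obtain ⟨k, hkle, hlow, hhigh⟩ : ∃ k, k ≤ n ∧ (∀ i : Fin n, (i : ℕ) < k → blockOf i = 0) ∧
        (∀ i : Fin n, k ≤ (i : ℕ) → blockOf i ≠ 0) := by
      have hex : ∃ j : ℕ, j = n ∨ ∃ h : j < n, blockOf ⟨j, h⟩ ≠ 0 := ⟨n, Or.inl rfl⟩
      refine ⟨Nat.find hex, ?_, ?_, ?_⟩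
      · rcases Nat.find_spec hex with h | ⟨h, _⟩
        · omega
        · omega
      · intro i hi
        have := Nat.find_min hex hi
        push_neg at this
        obtain ⟨h1, h2⟩ := this
        have := h2 i.isLt
        rwa [Fin.eta] at this
      · intro i hi
        rcases Nat.find_spec hex with h | ⟨h, hne⟩
        · exfalso; have := i.isLt; omega
        · have hmle : blockOf ⟨Nat.find hex, h⟩ ≤ blockOf i := hmono (by simpa [Fin.le_def] using hi)
          intro h0
          rw [h0] at hmle
          exact hne (le_antisymm (by simpa using hmle) (Fin.zero_le _))
    obtain ⟨n', rfl⟩ : ∃ n', n = n' + k := ⟨n - k, by omega⟩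
    have hne0 : ∀ i : Fin n', blockOf ⟨(i : ℕ) + k, by have := i.isLt; omega⟩ ≠ 0 :=
      fun i => hhigh _ (Nat.le_add_left k i)
    set f : Fin n' → Fin r := fun i =>
      ⟨(blockOf ⟨(i : ℕ) + k, by have := i.isLt; omega⟩ : Fin (r+1)).val - 1, by
        have h1 := hne0 i
        have h2 := (blockOf ⟨(i : ℕ) + k, by have := i.isLt; omega⟩).isLt
        have h3 : (blockOf ⟨(i : ℕ) + k, by have := i.isLt; omega⟩).val ≠ 0 :=
          fun hh => h1 (Fin.ext hh)
        omega⟩ with hfdef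
    have hfsucc : ∀ i : Fin n', (f i).succ = blockOf ⟨(i : ℕ) + k, by have := i.isLt; omega⟩ := by
      intro i
      have h1 := hne0 i
      have h3 : (blockOf ⟨(i : ℕ) + k, by have := i.isLt; omega⟩).val ≠ 0 :=
        fun hh => h1 (Fin.ext hh)
      refine Fin.ext ?_
      simp only [hfdef, Fin.val_succ]
      omega
    have hmono' : Monotone f := by
      intro a a' haa
      have := hmono (show (⟨(a : ℕ) + k, by have := a.isLt; omega⟩ : Fin (n' + k)) ≤
          ⟨(a' : ℕ) + k, by have := a'.isLt; omega⟩ by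
        simp only [Fin.le_def]
        have := haa
        simp only [Fin.le_def] at this
        omega)
      simp only [Fin.le_def] at this ⊢
      show (blockOf ⟨(a : ℕ) + k, by have := a.isLt; omega⟩ : Fin (r+1)).val - 1 ≤
        (blockOf ⟨(a' : ℕ) + k, by have := a'.isLt; omega⟩ : Fin (r+1)).val - 1
      omega
    have hsurj' : Function.Surjective f := by
      intro j
      obtain ⟨i, hi⟩ := hsurj j.succ
      have hik : k ≤ (i : ℕ) := by
        by_contra hcon
        push_neg at hcon
        have := hlow i hcon
        rw [this] at hi
        exact (Fin.succ_ne_zero j) hi.symm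
      refine ⟨⟨(i : ℕ) - k, by have := i.isLt; omega⟩, ?_⟩
      have hieq : (⟨((⟨(i : ℕ) - k, by have := i.isLt; omega⟩ : Fin n') : ℕ) + k,
          by have := i.isLt; omega⟩ : Fin (n' + k)) = i := Fin.ext (by simp; omega)
      refine Fin.ext ?_
      simp only [hfdef, hieq, hi, Fin.val_succ]
      omega
    have hι' : Function.Injective (fun i : Fin n' =>
        ι ⟨(i : ℕ) + k, by have := i.isLt; omega⟩) := by
      intro a b hab
      have h2 := hι hab
      rw [Fin.mk.injEq] at h2
      exact Fin.ext (by omega)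
    rw [qeval_block k n' (Qb 0) (fun i => Qb (blockOf i)) φ (fun i hi => by show Qb (blockOf i) = Qb 0; rw [hlow i hi]),
      msoEval_succ']
    have hA : ∀ g : Fin k → Bool,
        qeval n' (fun i : Fin n' => Qb (blockOf ⟨(i : ℕ) + k, by have := i.isLt; omega⟩))
          (fun β => φ (fun i => if h : (i : ℕ) < k then g ⟨(i : ℕ), h⟩
            else β ⟨(i : ℕ) - k, by have := i.isLt; omega⟩)) ↔
        msoEval r (fun j => Qb j.succ) (fun Ss => φ (fun i : Fin (n' + k) =>
          if h : (i : ℕ) < k then g ⟨(i : ℕ), h⟩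
          else decide (ι ⟨(i : ℕ) - k + k, by have := i.isLt; omega⟩
            ∈ Ss (f ⟨(i : ℕ) - k, by have := i.isLt; omega⟩)))) := by
      intro g
      have e1 : (fun i : Fin n' => Qb (blockOf ⟨(i : ℕ) + k, by have := i.isLt; omega⟩))
          = (fun i : Fin n' => Qb ((f i).succ)) :=
        funext fun i => congrArg Qb (hfsucc i).symm
      rw [e1]
      exact ih (fun j => Qb j.succ) n' f hmono' hsurj' U
        (fun i' : Fin n' => ι ⟨(i' : ℕ) + k, by have := i'.isLt; omega⟩) hι'
        (fun β => φ (fun i => if h : (i : ℕ) < k then g ⟨(i : ℕ), h⟩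
          else β ⟨(i : ℕ) - k, by have := i.isLt; omega⟩))
    have hbridge : ∀ (g : Fin k → Bool) (S : Set U),
        (∀ (i : Fin (n' + k)) (h : (i : ℕ) < k), g ⟨(i : ℕ), h⟩ = decide (ι i ∈ S)) →
        (fun Ss : Fin r → Set U => φ (fun i : Fin (n' + k) =>
          if h : (i : ℕ) < k then g ⟨(i : ℕ), h⟩
          else decide (ι ⟨(i : ℕ) - k + k, by have := i.isLt; omega⟩
            ∈ Ss (f ⟨(i : ℕ) - k, by have := i.isLt; omega⟩))))
        = (fun Ss : Fin r → Set U => φ (fun i => decide (ι i ∈ (Fin.cons S Ss : Fin (r+1) → Set U) (blockOf i)))) := by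
      intro g S hgs
      funext Ss
      refine congrArg φ (funext fun i => ?_)
      by_cases h : (i : ℕ) < k
      · rw [dif_pos h, hgs i h, hlow i h, Fin.cons_zero]
      · rw [dif_neg h]
        have hieq : (⟨(i : ℕ) - k + k, by have := i.isLt; omega⟩ : Fin (n' + k)) = i :=
          Fin.ext (show (i : ℕ) - k + k = (i : ℕ) by omega)
        have hbo : blockOf i = (f ⟨(i : ℕ) - k, by have := i.isLt; omega⟩).succ := by
          rw [hfsucc]
          exact congrArg blockOf hieq.symm
        rw [hieq, hbo, Fin.cons_succ]
    have hSg : ∀ g : Fin k → Bool, ∃ S : Set U,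
        ∀ (i : Fin (n' + k)) (h : (i : ℕ) < k), g ⟨(i : ℕ), h⟩ = decide (ι i ∈ S) := by
      intro g
      refine ⟨{u : U | ∃ i' : Fin (n' + k), ∃ h' : (i' : ℕ) < k, ι i' = u ∧
        g ⟨(i' : ℕ), h'⟩ = true}, ?_⟩
      intro i h
      symm
      refine decide_eq_of_iff ?_
      constructor
      · rintro ⟨i', h', hii, hgi⟩
        obtain rfl : i' = i := hι hii
        exact hgi
      · intro hg
        exact ⟨i, h, rfl, hg⟩
    have hgS : ∀ (S : Set U) (i : Fin (n' + k)) (h : (i : ℕ) < k),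
        (fun j : Fin k => decide (ι ⟨(j : ℕ), by have := j.isLt; omega⟩ ∈ S)) ⟨(i : ℕ), h⟩
          = decide (ι i ∈ S) := fun S i h => rfl
    cases hQ0 : Qb 0 with
    | true =>
      simp only [if_true']
      constructor
      · rintro ⟨g, hg⟩
        obtain ⟨S, hrel⟩ := hSg g
        exact ⟨S, Eq.mp (congrArg (msoEval r (fun j => Qb j.succ)) (hbridge g S hrel))
          ((hA g).mp hg)⟩
      · rintro ⟨S, hS⟩
        refine ⟨fun j : Fin k => decide (ι ⟨(j : ℕ), by have := j.isLt; omega⟩ ∈ S), ?_⟩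
        refine (hA (fun j : Fin k => decide (ι ⟨(j : ℕ), by have := j.isLt; omega⟩ ∈ S))).mpr ?_
        exact Eq.mp (congrArg (msoEval r (fun j => Qb j.succ))
          (hbridge (fun j : Fin k => decide (ι ⟨(j : ℕ), by have := j.isLt; omega⟩ ∈ S)) S
            (hgS S)).symm) hS
    | false =>
      simp only [if_false']
      constructor
      · intro hall S
        exact Eq.mp (congrArg (msoEval r (fun j => Qb j.succ))
          (hbridge (fun j : Fin k => decide (ι ⟨(j : ℕ), by have := j.isLt; omega⟩ ∈ S)) S
            (hgS S)))
          ((hA (fun j : Fin k => decide (ι ⟨(j : ℕ), by have := j.isLt; omega⟩ ∈ S))).mp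
            (hall (fun j : Fin k => decide (ι ⟨(j : ℕ), by have := j.isLt; omega⟩ ∈ S))))
      · intro hall g
        obtain ⟨S, hrel⟩ := hSg g
        exact (hA g).mpr (Eq.mp (congrArg (msoEval r (fun j => Qb j.succ))
          (hbridge g S hrel).symm) (hall S))

/-- The QBF `Q₁x₁ … Qₙxₙ . γ` (with CNF matrix given by `clause`) is true iff the
MSO sentence `Q₁S₁ … Q_rS_r ∀c ∃x . clause(c) → ⋁ⱼ ((blockⱼ(x) ∧ pos(x,c) ∧ Sⱼ(x)) ∨
(blockⱼ(x) ∧ neg(x,c) ∧ ¬Sⱼ(x)))` holds on the associated relational structure with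
universe `Fin n ⊕ Fin m` (variables ⊕ clauses).  Here `blockOf` assigns each variable
its (maximal consecutive same-quantifier) block, `Qb` is the block quantifier. -/
theorem stmt10 {n m r : ℕ} (Q : Fin n → Bool) (clause : Fin m → Finset (Fin n × Bool))
    (blockOf : Fin n → Fin r) (Qb : Fin r → Bool)
    (hmono : Monotone blockOf) (hsurj : Function.Surjective blockOf)
    (hQ : ∀ i, Q i = Qb (blockOf i))
    (hmax : ∀ i : Fin n, ∀ h : (i : ℕ) + 1 < n,
      blockOf ⟨(i : ℕ) + 1, h⟩ ≠ blockOf i → Qb (blockOf ⟨(i : ℕ) + 1, h⟩) ≠ Qb (blockOf i)) :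
    qeval n Q (fun β => ∀ C : Fin m, ∃ l ∈ clause C, β l.1 = l.2) ↔
      msoEval (U := Fin n ⊕ Fin m) r Qb (fun S =>
        ∀ c : Fin n ⊕ Fin m, (∃ C : Fin m, c = Sum.inr C) →
          ∃ x : Fin n ⊕ Fin m, ∃ j : Fin r,
            ((∃ v : Fin n, x = Sum.inl v ∧ blockOf v = j) ∧
              (∃ (v : Fin n) (C : Fin m), x = Sum.inl v ∧ c = Sum.inr C ∧
                (v, true) ∈ clause C) ∧ x ∈ S j) ∨
            ((∃ v : Fin n, x = Sum.inl v ∧ blockOf v = j) ∧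
              (∃ (v : Fin n) (C : Fin m), x = Sum.inl v ∧ c = Sum.inr C ∧
                (v, false) ∈ clause C) ∧ x ∉ S j)) := by
  have hQeq : Q = fun i => Qb (blockOf i) := funext hQ
  rw [hQeq]
  refine (key r Qb n blockOf hmono hsurj (Fin n ⊕ Fin m) Sum.inl Sum.inl_injective
    (fun β => ∀ C : Fin m, ∃ l ∈ clause C, β l.1 = l.2)).trans ?_
  refine iff_of_eq (congrArg (msoEval r Qb) (funext fun S => propext ?_))
  show (∀ C : Fin m, ∃ l ∈ clause C, decide (Sum.inl l.1 ∈ S (blockOf l.1)) = l.2) ↔ _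
  constructor
  · intro hval c hc
    obtain ⟨C, rfl⟩ := hc
    obtain ⟨⟨v, bl⟩, hmem, hβ⟩ := hval C
    cases bl with
    | true =>
      exact ⟨Sum.inl v, blockOf v, Or.inl ⟨⟨v, rfl, rfl⟩, ⟨v, C, rfl, rfl, hmem⟩,
        of_decide_eq_true hβ⟩⟩
    | false =>
      exact ⟨Sum.inl v, blockOf v, Or.inr ⟨⟨v, rfl, rfl⟩, ⟨v, C, rfl, rfl, hmem⟩,
        of_decide_eq_false hβ⟩⟩
  · intro hmso C
    obtain ⟨x, j, hcase⟩ := hmso (Sum.inr C) ⟨C, rfl⟩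
    rcases hcase with ⟨⟨v, hxv, hbj⟩, ⟨v', C', hx', hc', hmem⟩, hS⟩ |
      ⟨⟨w, hxw, hbw⟩, ⟨w', D', hxw', hcw', hmemw⟩, hSw⟩
    · subst hxv
      subst hbj
      have hmem' : (v, true) ∈ clause C := by
        rwa [← Sum.inl_injective hx', ← Sum.inr_injective hc'] at hmem
      exact ⟨(v, true), hmem', decide_eq_true hS⟩
    · subst hxw
      subst hbw
      have hmemw' : (w, false) ∈ clause C := by
        rwa [← Sum.inl_injective hxw', ← Sum.inr_injective hcw'] at hmemw
      exact ⟨(w, false), hmemw', decide_eq_false hSw⟩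
end

section
/- Let ψ be a CNF over variables V, and define ψ' over V ∪ {f_C : C ∈ clauses(ψ)} ∪ {f_r} as the DNF consisting of: for each clause C = (c₁ ∨ … ∨ c_s), the terms expressing ¬(f_C ↔ (c₁ ∨ … ∨ c_s)); the terms expressing ¬(f_r ↔ ⋀_C f_C); and the single term f_r. Then for every total assignment α of V: α satisfies ψ iff every extension of α to the new variables satisfies ψ' (i.e., ψ'|α is a tautology over the new variables). -/
/-- A total assignment satisfies a CNF. -/
def SatCNF {V ι : Type*} (clause : ι → Finset (V × Bool)) (α : V → Bool) : Prop :=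
  ∀ i : ι, ∃ l ∈ clause i, α l.1 = l.2

/-- An assignment satisfies a DNF iff it makes all literals of some term true. -/
def SatDNF {W : Type*} (ψ : Set (Set (W × Bool))) (δ : W → Bool) : Prop :=
  ∃ d ∈ ψ, ∀ l ∈ d, δ l.1 = l.2

/-- The DNF `ψ'` of the CNF-to-DNF conversion, over variables
`V ⊕ ι ⊕ Unit` (original variables, one variable `f_C` per clause, and `f_r`):
it consists of the terms of `¬(f_C ↔ ⋁ C)` for every clause `C`, the terms of
`¬(f_r ↔ ⋀_C f_C)`, and the term `{f_r}`. -/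
def cnfToDnf {V ι : Type*} (clause : ι → Finset (V × Bool)) :
    Set (Set ((V ⊕ ι ⊕ Unit) × Bool)) :=
  -- f_C ∧ ¬c₁ ∧ … ∧ ¬c_s
  {d | ∃ i : ι, d = insert ((Sum.inr (Sum.inl i), true))
      {p | ∃ l ∈ clause i, p = ((Sum.inl l.1 : V ⊕ ι ⊕ Unit), !l.2)}} ∪
  -- ¬f_C ∧ cⱼ
  {d | ∃ i : ι, ∃ l ∈ clause i,
      d = {((Sum.inr (Sum.inl i) : V ⊕ ι ⊕ Unit), false), (Sum.inl l.1, l.2)}} ∪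
  -- f_r ∧ ¬f_C
  {d | ∃ i : ι, d = {((Sum.inr (Sum.inr ()) : V ⊕ ι ⊕ Unit), true),
      (Sum.inr (Sum.inl i), false)}} ∪
  -- ¬f_r ∧ ⋀_C f_C
  {insert ((Sum.inr (Sum.inr ()) : V ⊕ ι ⊕ Unit), false)
      {p | ∃ i : ι, p = ((Sum.inr (Sum.inl i) : V ⊕ ι ⊕ Unit), true)}} ∪
  -- f_r
  {{((Sum.inr (Sum.inr ()) : V ⊕ ι ⊕ Unit), true)}}

/-- `α` satisfies the CNF `ψ` iff every extension of `α` to the auxiliary variables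
satisfies the DNF `ψ'`, i.e. `ψ'|α` is a tautology over the new variables. -/
theorem stmt17 {V ι : Type*} (clause : ι → Finset (V × Bool)) (α : V → Bool) :
    SatCNF clause α ↔
      ∀ δ : (V ⊕ ι ⊕ Unit) → Bool, (∀ v : V, δ (Sum.inl v) = α v) →
        SatDNF (cnfToDnf clause) δ := by
  classical
  constructor
  · intro hsat δ hδ
    by_cases hr : δ (Sum.inr (Sum.inr ())) = true
    · -- term {f_r}
      refine ⟨_, Or.inr rfl, ?_⟩
      intro l hl
      rw [Set.mem_singleton_iff] at hl
      subst hl; exact hr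
    · by_cases hall : ∀ i : ι, δ (Sum.inr (Sum.inl i)) = true
      · -- term ¬f_r ∧ ⋀ f_C
        refine ⟨_, Or.inl (Or.inr rfl), ?_⟩
        intro l hl
        rcases hl with hl | hl
        · subst hl; simpa using hr
        · obtain ⟨i, rfl⟩ := hl; exact hall i
      · push_neg at hall
        obtain ⟨i, hi⟩ := hall
        obtain ⟨l, hl, hαl⟩ := hsat i
        -- term ¬f_C ∧ l
        refine ⟨_, Or.inl (Or.inl (Or.inl (Or.inr ⟨i, l, hl, rfl⟩))), ?_⟩
        intro p hp
        rcases hp with hp | hp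
        · subst hp; simpa using hi
        · rw [Set.mem_singleton_iff] at hp
          subst hp; rw [hδ]; exact hαl
  · intro h i
    set δ : (V ⊕ ι ⊕ Unit) → Bool := fun w =>
      match w with
      | Sum.inl v => α v
      | Sum.inr (Sum.inl j) => decide (∃ l ∈ clause j, α l.1 = l.2)
      | Sum.inr (Sum.inr _) => false with hδdef
    obtain ⟨d, hd, hsat⟩ := h δ (fun v => rfl)
    rcases hd with (((⟨j, rfl⟩ | ⟨j, l, hl, rfl⟩) | ⟨j, rfl⟩) | hd) | hd
    · -- f_C ∧ ¬lits : contradiction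
      have h1 : δ (Sum.inr (Sum.inl j)) = true := hsat _ (Set.mem_insert _ _)
      have h2 : ∃ l ∈ clause j, α l.1 = l.2 := by simpa [hδdef] using h1
      obtain ⟨l, hl, hαl⟩ := h2
      have h3 := hsat _ (Set.mem_insert_of_mem _ ⟨l, hl, rfl⟩)
      simp only [hδdef] at h3
      rw [hαl] at h3
      simp at h3
    · -- ¬f_C ∧ l : contradiction
      have h1 : δ (Sum.inr (Sum.inl j)) = false := hsat _ (Set.mem_insert _ _)
      have h2 := hsat _ (Set.mem_insert_of_mem _ (Set.mem_singleton _))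
      simp only [hδdef, decide_eq_false_iff_not] at h1
      exact absurd ⟨l, hl, h2⟩ h1
    · -- f_r ∧ ¬f_C : contradiction
      have h1 : δ (Sum.inr (Sum.inr ())) = true := hsat _ (Set.mem_insert _ _)
      simp [hδdef] at h1
    · -- ¬f_r ∧ ⋀ f_C
      rw [Set.mem_singleton_iff] at hd
      subst hd
      have h1 : δ (Sum.inr (Sum.inl i)) = true :=
        hsat _ (Set.mem_insert_of_mem _ ⟨i, rfl⟩)
      simpa [hδdef] using h1
    · -- f_r : contradiction
      rw [Set.mem_singleton_iff] at hd
      subst hd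
      have h1 : δ (Sum.inr (Sum.inr ())) = true := hsat _ (Set.mem_singleton _)
      simp [hδdef] at h1
end
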